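/- Leanness of the derivation operators D_n and δ_n: fix n, ℓ, k ≥ 1. (a) For every ordinal β such that ω^β < Ω_{k+1} and ω^β is ℓ-lean, the ordinal D_n(ω^β) is ℓ·n·k-lean. (b) For every ℓ-lean ordinal α with 0 < α < Ω_{k+1}, every element of δ_n(α) is (ℓ + ℓ·n·k)-lean. -/

import Mathlib

/-! Ordinals below `ε₀` are represented in Cantor normal form by Mathlib's type `ONote`
(`ONote.oadd e n a` represents `ω^e·n + a`; `ONote.NF` is the Cantor normal form predicate). -/

/-- Number of `oadd` constructors (used as a termination measure). -/
def ONote.cnt : ONote → ℕ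
  | .zero => 0
  | .oadd e _ a => e.cnt + a.cnt + 1

/-- Natural (Hessenberg) sum `⊕` of two ordinal notations: merge the CNFs in
decreasing order of exponents, adding coefficients of equal exponents. -/
def ONote.nadd : ONote → ONote → ONote
  | .zero, y => y
  | .oadd e₁ n₁ a₁, .zero => .oadd e₁ n₁ a₁
  | .oadd e₁ n₁ a₁, .oadd e₂ n₂ a₂ =>
    match ONote.cmp e₁ e₂ with
    | .lt => .oadd e₂ n₂ (ONote.nadd (.oadd e₁ n₁ a₁) a₂)
    | .eq => .oadd e₁ (n₁ + n₂) (ONote.nadd a₁ a₂)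
    | .gt => .oadd e₁ n₁ (ONote.nadd a₁ (.oadd e₂ n₂ a₂))
  termination_by x y => x.cnt + y.cnt
  decreasing_by all_goals (simp [ONote.cnt] <;> omega)

/-- `scaleN e m t` is `ω^e·m + t` (which is just `t` when `m = 0`). -/
def ONote.scaleN (e : ONote) (m : ℕ) (t : ONote) : ONote :=
  match m with
  | 0 => t
  | m + 1 => .oadd e ⟨m + 1, Nat.succ_pos m⟩ t

/-- Ordinal multiplication by a natural number:
`(ω^e·c + a)·m = ω^e·(c·m) + a` for `m ≥ 1`, and `α·0 = 0`. -/
def ONote.omulNat : ONote → ℕ → ONote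
  | _, 0 => .zero
  | .zero, _ => .zero
  | .oadd e c a, m + 1 => .oadd e (c * ⟨m + 1, Nat.succ_pos m⟩) a

/-- Helper for `ONote.Dn`: `DnAux n pre β` computes
`⊕_i ω^{pre ⊕ (β minus its i-th group) ⊕ ω^{γ_i}·(c_i−1) ⊕ γ_i·(n−1) ⊕ D_n(ω^{γ_i})}·(c_i·n)`
where `β = ω^{γ_1}·c_1 + … + ω^{γ_d}·c_d` in strict CNF and `pre` accumulates the
already processed groups. -/
def ONote.DnAux (n : ℕ) : ONote → ONote → ONote
  | _, .zero => .zero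
  | pre, .oadd e c rest =>
    ONote.nadd
      (ONote.scaleN
        (ONote.nadd (ONote.nadd (ONote.nadd pre rest) (ONote.scaleN e ((c : ℕ) - 1) .zero))
          (ONote.nadd (ONote.omulNat e (n - 1)) (ONote.DnAux n .zero e)))
        ((c : ℕ) * n) .zero)
      (ONote.DnAux n (ONote.nadd pre (.oadd e c .zero)) rest)
  termination_by _ β => β.cnt
  decreasing_by all_goals (simp [ONote.cnt] <;> omega)

/-- `Dn n β` is `D_n(ω^β)` : `D_n(ω^0) = 0` and, for
`β = ω^{η_1} ⊕ … ⊕ ω^{η_m} > 0` in CNF,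
`D_n(ω^β) = ⊕_{i=1}^m ω^{(⊕_{p≠i} ω^{η_p}) ⊕ η_i·(n−1) ⊕ D_n(ω^{η_i})}·n`. -/
def ONote.Dn (n : ℕ) (β : ONote) : ONote :=
  ONote.DnAux n .zero β

/-- Helper for `ONote.deltaList`, processing the groups of the strict CNF one by one. -/
def ONote.deltaAux (n : ℕ) : ONote → ONote → List ONote
  | _, .zero => []
  | pre, .oadd e c rest =>
    (ONote.nadd (ONote.nadd pre rest)
        (ONote.nadd (ONote.scaleN e ((c : ℕ) - 1) .zero) (ONote.Dn n e)))
      :: ONote.deltaAux n (ONote.nadd pre (.oadd e c .zero)) rest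

/-- The finite set `δ_n(α)` (as a list) : for `α = ω^{β_1}·c_1 ⊕ … ⊕ ω^{β_d}·c_d > 0` in
strict CNF, `δ_n(α) = { (⊕_{p≠i} ω^{β_p}·c_p) ⊕ ω^{β_i}·(c_i−1) ⊕ D_n(ω^{β_i}) : 1 ≤ i ≤ d }`. -/
def ONote.deltaList (n : ℕ) (α : ONote) : List ONote :=
  ONote.deltaAux n .zero α

/-- `α` is `ℓ`-lean : every coefficient appearing hereditarily in the CNF of `α`
(in `α` and in all exponents) is at most `ℓ`. -/
def ONote.IsLean (l : ℕ) : ONote → Prop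
  | .zero => True
  | .oadd e c a => (c : ℕ) ≤ l ∧ ONote.IsLean l e ∧ ONote.IsLean l a

/-- `Ω_k`, the height-`k` tower of `ω` : `Ω_1 = ω` and `Ω_{k+1} = ω^{Ω_k}`
(with the convention `Ω_0 = 1`). -/
def ONote.OmegaTower : ℕ → ONote
  | 0 => 1
  | k + 1 => .oadd (ONote.OmegaTower k) 1 .zero

/-- `(Ω_k)_ℓ`, the `ℓ`-th element of the fundamental sequence of the tower `Ω_k` :
`(Ω_1)_ℓ = ℓ` and `(Ω_{k+1})_ℓ = ω^{(Ω_k)_ℓ}`. -/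
def ONote.towerFS : ℕ → ℕ → ONote
  | 0, l => ONote.ofNat l
  | 1, l => ONote.ofNat l
  | k + 2, l => .oadd (ONote.towerFS (k + 1) l) 1 .zero

/-- Classification of a CNF ordinal notation together with the fixed assignment of
fundamental sequences: `.inl none` for `0`, `.inl (some β)` for the successor of `β`, and
`.inr f` for a limit with fundamental sequence `f`. The assignment is the standard one:
`(γ + ω^{β+1})_x = γ + ω^β·x` and `(γ + ω^λ)_x = γ + ω^{λ_x}` for limit `λ`. -/
def ONote.fundSeq : ONote → (Option ONote) ⊕ (ℕ → ONote)
  | .zero => .inl none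
  | .oadd e c a =>
    match ONote.fundSeq a with
    | .inl (some a') => .inl (some (.oadd e c a'))
    | .inr f => .inr (fun x => .oadd e c (f x))
    | .inl none =>
      match e, ONote.fundSeq e with
      | .zero, _ => .inl (some (ONote.scaleN .zero ((c : ℕ) - 1) .zero))
      | _, .inl (some e') => .inr (fun x => ONote.scaleN e ((c : ℕ) - 1) (ONote.scaleN e' x .zero))
      | _, .inr f => .inr (fun x => ONote.scaleN e ((c : ℕ) - 1) (.oadd (f x) 1 .zero))
      | _, .inl none => .inl none

/-- The Hardy hierarchy `(H^α)_{α<ε₀}` for the successor function, as a relation: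
`HardyRel α n m` holds iff `H^α(n) = m`. It is the graph of the recursion
`H^0(x) = x`, `H^{α+1}(x) = H^α(x+1)`, `H^λ(x) = H^{λ_x}(x)`. -/
inductive HardyRel : ONote → ℕ → ℕ → Prop
  | zero (n : ℕ) : HardyRel .zero n n
  | succ {α β : ONote} {n m : ℕ} : ONote.fundSeq α = .inl (some β) →
      HardyRel β (n + 1) m → HardyRel α n m
  | limit {α : ONote} {f : ℕ → ONote} {n m : ℕ} : ONote.fundSeq α = .inr f →
      HardyRel (f n) n m → HardyRel α n m

/-- The Cichoń hierarchy `(h_α)_{α<ε₀}` for a function `h : ℕ → ℕ`, as a relation: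
`CichonRel h α x y` holds iff `h_α(x) = y`. It is the graph of the recursion
`h_0(x) = 0`, `h_{α+1}(x) = 1 + h_α(h(x))`, `h_λ(x) = h_{λ_x}(x)`. -/
inductive CichonRel (h : ℕ → ℕ) : ONote → ℕ → ℕ → Prop
  | zero (x : ℕ) : CichonRel h .zero x 0
  | succ {α β : ONote} {x y : ℕ} : ONote.fundSeq α = .inl (some β) →
      CichonRel h β (h x) y → CichonRel h α x (y + 1)
  | limit {α : ONote} {f : ℕ → ONote} {x y : ℕ} : ONote.fundSeq α = .inr f →
      CichonRel h (f x) x y → CichonRel h α x y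

/-- The `m`-predecessor operation `P_m`, as a relation: `PRel m α β` holds iff
`P_m(α) = β`, where `P_m(β+1) = β` and `P_m(λ) = P_m(λ_m)` for limit `λ`. -/
inductive PRel (m : ℕ) : ONote → ONote → Prop
  | succ {α β : ONote} : ONote.fundSeq α = .inl (some β) → PRel m α β
  | limit {α β : ONote} {f : ℕ → ONote} : ONote.fundSeq α = .inr f →
      PRel m (f m) β → PRel m α β

/-- The Hardy rewrite relation `→_H` on pairs of an ordinal below `ε₀` and a natural
number, generated by `(α+1, n) →_H (α, n+1)` and `(λ, n) →_H (λ_n, n)` for limit `λ`. -/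
inductive HStep : ONote × ℕ → ONote × ℕ → Prop
  | succ {α β : ONote} {n : ℕ} : ONote.fundSeq α = .inl (some β) → HStep (α, n) (β, n + 1)
  | limit {α : ONote} {f : ℕ → ONote} {n : ℕ} : ONote.fundSeq α = .inr f →
      HStep (α, n) (f n, n)

/-- `→*_H`, the reflexive-transitive closure of the Hardy rewrite relation. -/
def HardyRT : ONote × ℕ → ONote × ℕ → Prop :=
  Relation.ReflTransGen HStep

/-!
Everything is bookkeeping of `coeff g x`, the total coefficient of `ω^g` in `x`, which is
additive under `⊕`. A natural sum of `ℓ₁`- and `ℓ₂`-lean ordinals is `(ℓ₁ + ℓ₂)`-lean, and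
`ℓ`-lean if no exponent occurs in both. In `D_n(ω^β)`, with `β = ω^{γ_1}·c_1 + ⋯` in strict
CNF, the exponent of the `i`-th term has `ω^{γ_i}`-coefficient `c_i - 1`, whereas every later
exponent has `ω^{γ_i}`-coefficient at least `c_i`; so the terms have pairwise distinct exponents,
and for the same reason `ω^β` does not occur in `D_n(ω^β)`. Each exponent of `D_n(ω^β)` is an
`ℓ`-lean sum plus `γ_i·(n-1) ⊕ D_n(ω^{γ_i})`, and `γ_i` lies one level lower in the tower
`Ω_k`, which produces the bound `ℓ + ℓ·(n-1) + ℓ·n·(k-1) = ℓ·n·k`.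
-/

namespace ONote

open Ordinal

def coeff (g : ONote) : ONote → ℕ
  | zero => 0
  | oadd e c a => (if e = g then (c : ℕ) else 0) + coeff g a

@[simp] theorem coeff_zero (g : ONote) : coeff g 0 = 0 := rfl

@[simp] theorem coeff_oadd (g e : ONote) (c : ℕ+) (a : ONote) :
    coeff g (oadd e c a) = (if e = g then (c : ℕ) else 0) + coeff g a := rfl

theorem coeff_nadd (g x y : ONote) : coeff g (nadd x y) = coeff g x + coeff g y := by
  induction x, y using nadd.induct with
  | case1 y => rw [nadd]; simp
  | case2 e₁ n₁ a₁ => rw [nadd]; simp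
  | case3 e₁ n₁ a₁ e₂ n₂ a₂ hc ih => rw [nadd, hc]; simp only [coeff_oadd] at ih ⊢; omega
  | case4 e₁ n₁ a₁ e₂ n₂ a₂ hc ih =>
    obtain rfl := eq_of_cmp_eq hc
    rw [nadd, hc]; simp only [coeff_oadd, PNat.add_coe] at ih ⊢; split_ifs <;> omega
  | case5 e₁ n₁ a₁ e₂ n₂ a₂ hc ih => rw [nadd, hc]; simp only [coeff_oadd] at ih ⊢; omega

@[simp] theorem coeff_scaleN (g e : ONote) (m : ℕ) (t : ONote) :
    coeff g (scaleN e m t) = (if e = g then m else 0) + coeff g t := by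
  cases m with
  | zero => simp [scaleN]
  | succ m => exact coeff_oadd g e ⟨m + 1, m.succ_pos⟩ t

theorem coeff_omulNat_eq_zero {g x : ONote} (h : coeff g x = 0) (m : ℕ) :
    coeff g (omulNat x m) = 0 := by
  rcases x with _ | ⟨e, c, a⟩ <;> rcases m with _ | m <;> simp_all [omulNat]

theorem cnt_lt_of_coeff_ne_zero {g : ONote} : ∀ {x : ONote}, coeff g x ≠ 0 → g.cnt < x.cnt
  | zero, h => absurd rfl h
  | oadd e c a, h => by
    by_cases he : e = g
    · subst he; simp [cnt]
    · have := cnt_lt_of_coeff_ne_zero (x := a) (by simpa [he] using h)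
      simp [cnt]; omega

@[simp] theorem coeff_self (x : ONote) : coeff x x = 0 := by
  by_contra h
  exact lt_irrefl _ (cnt_lt_of_coeff_ne_zero h)

theorem coeff_eq_zero_of_nfBelow {g : ONote} :
    ∀ {x : ONote} {b : Ordinal}, NFBelow x b → b ≤ repr g → coeff g x = 0
  | zero, _, _, _ => coeff_zero g
  | oadd e c a, _, h, hg => by
    have he : e ≠ g := fun he => (h.lt.trans_le hg).ne (by rw [he])
    simp [he, coeff_eq_zero_of_nfBelow h.snd (h.lt.le.trans hg)]

theorem IsLean.mono {l l' : ℕ} (h : l ≤ l') : ∀ {x : ONote}, IsLean l x → IsLean l' x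
  | zero, _ => trivial
  | oadd _ _ _, ⟨hc, he, ha⟩ => ⟨hc.trans h, he.mono h, ha.mono h⟩

theorem isLean_nadd : ∀ {x y : ONote} {l₁ l₂ : ℕ},
    IsLean l₁ x → IsLean l₂ y → IsLean (l₁ + l₂) (nadd x y) := by
  intro x y
  induction x, y using nadd.induct with
  | case1 y => intro l₁ l₂ _ hy; rw [nadd]; exact hy.mono (Nat.le_add_left _ _)
  | case2 e₁ n₁ a₁ => intro l₁ l₂ hx _; rw [nadd]; exact hx.mono (Nat.le_add_right _ _)
  | case3 e₁ n₁ a₁ e₂ n₂ a₂ hc ih =>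
    rintro l₁ l₂ hx ⟨hc₂, he₂, ha₂⟩
    rw [nadd, hc]
    exact ⟨hc₂.trans (Nat.le_add_left _ _), he₂.mono (Nat.le_add_left _ _), ih hx ha₂⟩
  | case4 e₁ n₁ a₁ e₂ n₂ a₂ hc ih =>
    rintro l₁ l₂ ⟨hc₁, he₁, ha₁⟩ ⟨hc₂, -, ha₂⟩
    rw [nadd, hc]
    exact ⟨by rw [PNat.add_coe]; omega, he₁.mono (Nat.le_add_right _ _), ih ha₁ ha₂⟩
  | case5 e₁ n₁ a₁ e₂ n₂ a₂ hc ih =>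
    rintro l₁ l₂ ⟨hc₁, he₁, ha₁⟩ hy
    rw [nadd, hc]
    exact ⟨hc₁.trans (Nat.le_add_right _ _), he₁.mono (Nat.le_add_right _ _), ih ha₁ hy⟩

theorem isLean_nadd_of_disjoint : ∀ {x y : ONote} {l : ℕ},
    (∀ g, coeff g x = 0 ∨ coeff g y = 0) → IsLean l x → IsLean l y → IsLean l (nadd x y) := by
  intro x y
  induction x, y using nadd.induct with
  | case1 y => intro l _ _ hy; rw [nadd]; exact hy
  | case2 e₁ n₁ a₁ => intro l _ hx _; rw [nadd]; exact hx
  | case3 e₁ n₁ a₁ e₂ n₂ a₂ hc ih =>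
    rintro l hdisj hx ⟨hc₂, he₂, ha₂⟩
    rw [nadd, hc]
    refine ⟨hc₂, he₂, ih (fun g => ?_) hx ha₂⟩
    rcases hdisj g with h | h <;> simp_all
  | case4 e₁ n₁ a₁ e₂ n₂ a₂ hc ih =>
    intro l hdisj _ _
    obtain rfl := eq_of_cmp_eq hc
    rcases hdisj e₁ with h | h <;> simp at h
  | case5 e₁ n₁ a₁ e₂ n₂ a₂ hc ih =>
    rintro l hdisj ⟨hc₁, he₁, ha₁⟩ hy
    rw [nadd, hc]
    refine ⟨hc₁, he₁, ih (fun g => ?_) ha₁ hy⟩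
    rcases hdisj g with h | h <;> simp_all

theorem isLean_scaleN {l m : ℕ} {e t : ONote} (hm : m ≤ l) (he : IsLean l e) (ht : IsLean l t) :
    IsLean l (scaleN e m t) := by
  cases m with
  | zero => exact ht
  | succ m => exact ⟨hm, he, ht⟩

theorem isLean_omulNat {l : ℕ} {x : ONote} (h : IsLean l x) (m : ℕ) :
    IsLean (l * m) (omulNat x m) := by
  rcases x with _ | ⟨e, c, a⟩ <;> rcases m with _ | m
  · trivial
  · trivial
  · trivial
  · obtain ⟨hc, he, ha⟩ := h
    have hl : l ≤ l * (m + 1) := Nat.le_mul_of_pos_right l m.succ_pos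
    exact ⟨Nat.mul_le_mul hc le_rfl, he.mono hl, ha.mono hl⟩

def DnExponent (n : ℕ) (pre e : ONote) (c : ℕ+) (rest : ONote) : ONote :=
  nadd (nadd (nadd pre rest) (scaleN e ((c : ℕ) - 1) zero))
    (nadd (omulNat e (n - 1)) (DnAux n zero e))

theorem DnAux_oadd (n : ℕ) (pre e : ONote) (c : ℕ+) (rest : ONote) :
    DnAux n pre (oadd e c rest) =
      nadd (scaleN (DnExponent n pre e c rest) ((c : ℕ) * n) zero)
        (DnAux n (nadd pre (oadd e c zero)) rest) := by
  rw [DnAux]; rfl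

theorem coeff_DnExponent_self {n : ℕ} {e : ONote} (he : coeff e (Dn n e) = 0)
    (pre : ONote) (c : ℕ+) (rest : ONote) :
    coeff e (DnExponent n pre e c rest) = coeff e pre + coeff e rest + ((c : ℕ) - 1) := by
  simp only [Dn, zero_def] at he
  simp [DnExponent, coeff_nadd, he, coeff_omulNat_eq_zero (coeff_self e)]

theorem coeff_le_of_coeff_DnAux_ne_zero (n : ℕ) {g : ONote} :
    ∀ {β pre X : ONote}, coeff X (DnAux n pre β) ≠ 0 → coeff g pre ≤ coeff g X
  | zero, pre, X, h => by rw [DnAux] at h; simp at h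
  | oadd e c rest, pre, X, h => by
    rw [DnAux_oadd, coeff_nadd, coeff_scaleN] at h
    by_cases hX : DnExponent n pre e c rest = X
    · subst hX
      simp only [DnExponent, coeff_nadd]
      omega
    · have := coeff_le_of_coeff_DnAux_ne_zero n (g := g) (by simpa [hX] using h)
      rw [coeff_nadd] at this
      omega

theorem exists_coeff_lt_of_coeff_DnAux_ne_zero (n : ℕ) :
    ∀ {β pre X : ONote}, coeff X (DnAux n pre β) ≠ 0 →
      ∃ g, coeff g X < coeff g pre + coeff g β
  | zero, pre, X, h => by rw [DnAux] at h; simp at h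
  | oadd e c rest, pre, X, h => by
    rw [DnAux_oadd, coeff_nadd, coeff_scaleN] at h
    by_cases hX : DnExponent n pre e c rest = X
    · subst hX
      have he : coeff e (Dn n e) = 0 := by
        by_contra he
        obtain ⟨g, hg⟩ := exists_coeff_lt_of_coeff_DnAux_ne_zero n he
        simp at hg
      refine ⟨e, ?_⟩
      rw [coeff_DnExponent_self he, coeff_oadd, if_pos rfl]
      have := c.pos
      omega
    · obtain ⟨g, hg⟩ := exists_coeff_lt_of_coeff_DnAux_ne_zero n (by simpa [hX] using h)
      refine ⟨g, ?_⟩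
      simp only [coeff_nadd, coeff_oadd, coeff_zero] at hg ⊢
      omega

theorem coeff_Dn_self (n : ℕ) (β : ONote) : coeff β (Dn n β) = 0 := by
  by_contra h
  obtain ⟨g, hg⟩ := exists_coeff_lt_of_coeff_DnAux_ne_zero n h
  simp at hg

theorem ne_zero_of_oadd_lt_omegaTower {e a : ONote} {c : ℕ+} {k : ℕ}
    (h : oadd e c a < OmegaTower k) : k ≠ 0 := by
  rintro rfl
  have h1 : (1 : Ordinal) ≤ ω ^ repr e := Order.one_le_iff_pos.2 (opow_pos _ omega0_pos)
  have h2 := (h1.trans (omega0_le_oadd e c a)).trans_lt (lt_def.1 h)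
  simp [OmegaTower] at h2

theorem lt_omegaTower_of_oadd_lt {e a : ONote} {c : ℕ+} {k : ℕ}
    (h : oadd e c a < OmegaTower (k + 1)) : e < OmegaTower k := by
  have h' : ω ^ repr e < ω ^ repr (OmegaTower k) := by
    simpa [OmegaTower] using (omega0_le_oadd e c a).trans_lt (lt_def.1 h)
  exact lt_def.2 ((opow_lt_opow_iff_right one_lt_omega0).1 h')

theorem lt_of_oadd_lt {e a x : ONote} {c : ℕ+} (h : oadd e c a < x) : a < x :=
  lt_def.2 (le_add_self.trans_lt (lt_def.1 h))

section Prefix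

variable {l : ℕ} {pre e rest : ONote} {c : ℕ+}

theorem isLean_nadd_rest (hβ : IsLean l (oadd e c rest)) (hpre : IsLean l pre)
    (hdisj : ∀ g, coeff g pre = 0 ∨ coeff g (oadd e c rest) = 0) :
    IsLean l (nadd pre rest) := by
  refine isLean_nadd_of_disjoint (fun g => ?_) hpre hβ.2.2
  rcases hdisj g with h | h <;> simp_all

theorem isLean_nadd_oadd_zero (hβ : IsLean l (oadd e c rest)) (hpre : IsLean l pre)
    (hdisj : ∀ g, coeff g pre = 0 ∨ coeff g (oadd e c rest) = 0) :
    IsLean l (nadd pre (oadd e c zero)) := by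
  refine isLean_nadd_of_disjoint (fun g => ?_) hpre ⟨hβ.1, hβ.2.1, trivial⟩
  rcases hdisj g with h | h <;> simp_all

theorem disjoint_nadd_oadd_zero_rest (hnf : (oadd e c rest).NF)
    (hdisj : ∀ g, coeff g pre = 0 ∨ coeff g (oadd e c rest) = 0) (g : ONote) :
    coeff g (nadd pre (oadd e c zero)) = 0 ∨ coeff g rest = 0 := by
  have hrest : coeff e rest = 0 := coeff_eq_zero_of_nfBelow hnf.snd' le_rfl
  rcases hdisj g with h | h
  · by_cases he : e = g
    · subst he; simp [hrest]
    · simp [coeff_nadd, h, he]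
  · simp only [coeff_oadd] at h
    omega

end Prefix

theorem isLean_DnExponent {n l k : ℕ} (hn : 1 ≤ n) {pre e rest : ONote} {c : ℕ+}
    (hX : IsLean l (nadd (nadd pre rest) (scaleN e ((c : ℕ) - 1) zero))) (he : IsLean l e)
    (hD : IsLean (l * n * k) (Dn n e)) :
    IsLean (l * n * (k + 1)) (DnExponent n pre e c rest) := by
  have h := isLean_nadd hX (isLean_nadd (isLean_omulNat he (n - 1)) hD)
  obtain ⟨m, rfl⟩ := Nat.exists_eq_add_of_le' hn
  refine h.mono (le_of_eq ?_)
  simp only [Nat.add_sub_cancel]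
  ring

theorem isLean_DnAux {n l : ℕ} (hn : 1 ≤ n) : ∀ {β pre : ONote} {k : ℕ}, β.NF →
    β < OmegaTower k → IsLean l β → IsLean l pre → (∀ g, coeff g pre = 0 ∨ coeff g β = 0) →
    IsLean (l * n * k) (DnAux n pre β)
  | zero, _, _, _, _, _, _, _ => by rw [DnAux]; trivial
  | oadd e c rest, pre, k, hnf, hlt, hβ, hpre, hdisj => by
    obtain ⟨k, rfl⟩ := Nat.exists_eq_succ_of_ne_zero (ne_zero_of_oadd_lt_omegaTower hlt)
    have hrest_e : coeff e rest = 0 := coeff_eq_zero_of_nfBelow hnf.snd' le_rfl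
    have hpre_e : coeff e pre = 0 := by simpa using hdisj e
    have hD : IsLean (l * n * k) (Dn n e) :=
      isLean_DnAux hn hnf.fst (lt_omegaTower_of_oadd_lt hlt) hβ.2.1 trivial (by simp)
    have hX : IsLean l (nadd (nadd pre rest) (scaleN e ((c : ℕ) - 1) zero)) := by
      refine isLean_nadd_of_disjoint (fun g => ?_) (isLean_nadd_rest hβ hpre hdisj)
        (isLean_scaleN ((Nat.sub_le _ _).trans hβ.1) hβ.2.1 trivial)
      by_cases he : e = g
      · subst he; simp [coeff_nadd, hpre_e, hrest_e]
      · simp [he]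
    have hE := isLean_DnExponent hn (c := c) hX hβ.2.1 hD
    have hR := isLean_DnAux hn hnf.snd (lt_of_oadd_lt hlt) hβ.2.2
      (isLean_nadd_oadd_zero hβ hpre hdisj) (disjoint_nadd_oadd_zero_rest hnf hdisj)
    rw [DnAux_oadd]
    refine isLean_nadd_of_disjoint (fun g => ?_) (isLean_scaleN ?_ hE trivial) hR
    · by_cases hg : DnExponent n pre e c rest = g
      · subst hg
        -- exponents of the tail have `ω^e`-coefficient at least `coeff e pre + c`, the head's
        -- exponent has `coeff e pre + (c - 1)`
        refine Or.inr (by_contra fun h => ?_)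
        have := coeff_le_of_coeff_DnAux_ne_zero n (g := e) h
        rw [coeff_DnExponent_self (coeff_Dn_self n e), coeff_nadd, coeff_oadd, if_pos rfl,
          zero_def, coeff_zero] at this
        have := c.pos
        omega
      · simp [hg]
    · calc (c : ℕ) * n ≤ l * n := Nat.mul_le_mul_right n hβ.1
        _ ≤ l * n * (k + 1) := Nat.le_mul_of_pos_right _ k.succ_pos

theorem isLean_Dn {n l k : ℕ} (hn : 1 ≤ n) {β : ONote} (hnf : β.NF) (hlt : β < OmegaTower k)
    (hβ : IsLean l β) : IsLean (l * n * k) (Dn n β) :=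
  isLean_DnAux hn hnf hlt hβ trivial (by simp)

theorem isLean_of_mem_deltaAux {n l k : ℕ} (hn : 1 ≤ n) (hk : 1 ≤ k) : ∀ {α pre : ONote}, α.NF →
    α < OmegaTower (k + 1) → IsLean l α → IsLean l pre →
    (∀ g, coeff g pre = 0 ∨ coeff g α = 0) → ∀ x ∈ deltaAux n pre α, IsLean (l + l * n * k) x
  | zero, _, _, _, _, _, _, x, hx => by simp [deltaAux] at hx
  | oadd e c rest, pre, hnf, hlt, hβ, hpre, hdisj, x, hx => by
    rw [deltaAux, List.mem_cons] at hx
    rcases hx with rfl | hx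
    · have hl : l ≤ l * n * k :=
        calc l = l * 1 * 1 := by ring
          _ ≤ l * n * k := by gcongr
      refine isLean_nadd (isLean_nadd_rest hβ hpre hdisj) (isLean_nadd_of_disjoint (fun g => ?_)
        ((isLean_scaleN ((Nat.sub_le _ _).trans hβ.1) hβ.2.1 (by trivial)).mono hl)
        (isLean_Dn hn hnf.fst (lt_omegaTower_of_oadd_lt hlt) hβ.2.1))
      by_cases he : e = g
      · subst he; simp [coeff_Dn_self]
      · simp [he]
    · exact isLean_of_mem_deltaAux hn hk hnf.snd (lt_of_oadd_lt hlt) hβ.2.2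
        (isLean_nadd_oadd_zero hβ hpre hdisj) (disjoint_nadd_oadd_zero_rest hnf hdisj) x hx

end ONote

theorem isLean_Dn_and_deltaList_general (n ℓ k : ℕ) (hn : 1 ≤ n) (hk : 1 ≤ k) :
    (∀ β : ONote, (ONote.oadd β 1 .zero).NF →
        ONote.oadd β 1 .zero < ONote.OmegaTower (k + 1) →
        ONote.IsLean ℓ (ONote.oadd β 1 .zero) →
        ONote.IsLean (ℓ * n * k) (ONote.Dn n β)) ∧
    (∀ α : ONote, α.NF → 0 < α → α < ONote.OmegaTower (k + 1) → ONote.IsLean ℓ α →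
        ∀ α' ∈ ONote.deltaList n α, ONote.IsLean (ℓ + ℓ * n * k) α') :=
  ⟨fun _ hnf hlt hlean =>
      ONote.isLean_Dn hn hnf.fst (ONote.lt_omegaTower_of_oadd_lt hlt) hlean.2.1,
    fun _ hnf _ hlt hlean =>
      ONote.isLean_of_mem_deltaAux hn hk hnf hlt hlean trivial (by simp)⟩

/-- Leanness of the derivation operators `D_n` and `δ_n`: fix
`n, ℓ, k ≥ 1`. (a) For every ordinal `β` such that `ω^β < Ω_{k+1}` and `ω^β` is `ℓ`-lean,
the ordinal `D_n(ω^β)` is `ℓ·n·k`-lean. (b) For every `ℓ`-lean ordinal `α` with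
`0 < α < Ω_{k+1}`, every element of `δ_n(α)` is `(ℓ + ℓ·n·k)`-lean. -/
theorem isLean_Dn_and_deltaList (n ℓ k : ℕ) (hn : 1 ≤ n) (hl : 1 ≤ ℓ) (hk : 1 ≤ k) :
    (∀ β : ONote, (ONote.oadd β 1 .zero).NF →
        ONote.oadd β 1 .zero < ONote.OmegaTower (k + 1) →
        ONote.IsLean ℓ (ONote.oadd β 1 .zero) →
        ONote.IsLean (ℓ * n * k) (ONote.Dn n β)) ∧
    (∀ α : ONote, α.NF → 0 < α → α < ONote.OmegaTower (k + 1) → ONote.IsLean ℓ α →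
        ∀ α' ∈ ONote.deltaList n α, ONote.IsLean (ℓ + ℓ * n * k) α') :=
  isLean_Dn_and_deltaList_general n ℓ k hn hk
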